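/- arXiv:1508.03066 — 6 statements merged into one kernel-verified Lean document; each statement's English description precedes it below -/
import Mathlib

section
/- Let X be a separable Fréchet space and let T : X → X be a continuous linear operator. Suppose there exist dense subsets Z and Y of X and a map S : Y → Y satisfying: (a) Tⁿ(z) → 0 as n → ∞ for every z ∈ Z; (b) Sⁿ(y) → 0 as n → ∞ for every y ∈ Y; (c) T(S(y)) = y for every y ∈ Y. Then T is mixing. -/
open Filter Topology

/-!
Fix `z ∈ Z ∩ U` and `v ∈ Y ∩ V`. The points `xₙ = z + Sⁿ v` converge to `z`, while
`Tⁿ xₙ = Tⁿ z + v` converges to `v`, because `Tⁿ (Sⁿ v) = v`. So for every large `n` the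
point `xₙ` lies in `U` and `Tⁿ xₙ` lies in `V`.
-/

section Mixing

variable {X : Type*} [TopologicalSpace X]

def IsTopologicallyMixing (f : X → X) : Prop :=
  ∀ U V : Set X, IsOpen U → IsOpen V → U.Nonempty → V.Nonempty →
    ∀ᶠ n in atTop, (f^[n] '' U ∩ V).Nonempty

theorem eventually_iterate_image_inter_nonempty_of_tendsto {f : X → X} {U V : Set X}
    (hU : IsOpen U) (hV : IsOpen V) {x : ℕ → X} {a b : X} (ha : a ∈ U) (hb : b ∈ V)
    (hx : Tendsto x atTop (𝓝 a)) (hfx : Tendsto (fun n => f^[n] (x n)) atTop (𝓝 b)) :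
    ∀ᶠ n in atTop, (f^[n] '' U ∩ V).Nonempty := by
  filter_upwards [hx.eventually (hU.mem_nhds ha), hfx.eventually (hV.mem_nhds hb)]
    with n hxU hfxV
  exact ⟨f^[n] (x n), Set.mem_image_of_mem _ hxU, hfxV⟩

/-- Kitai's criterion, with the right inverse `S` replaced by sequences `uₙ → 0`
satisfying `Tⁿ uₙ = v`. -/
theorem isTopologicallyMixing_of_dense {F : Type*} [AddZeroClass X] [ContinuousAdd X]
    [FunLike F X X] [AddHomClass F X X] (T : F) {Z Y : Set X} (hZ : Dense Z) (hY : Dense Y)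
    (hZ_tendsto : ∀ z ∈ Z, Tendsto (fun n => T^[n] z) atTop (𝓝 0))
    (hY_preimage : ∀ v ∈ Y, ∃ u : ℕ → X, Tendsto u atTop (𝓝 0) ∧ ∀ n, T^[n] (u n) = v) :
    IsTopologicallyMixing T := by
  intro U V hU hV hUne hVne
  obtain ⟨z, hzU, hzZ⟩ := hZ.inter_open_nonempty U hU hUne
  obtain ⟨v, hvV, hvY⟩ := hY.inter_open_nonempty V hV hVne
  obtain ⟨u, hu, hTu⟩ := hY_preimage v hvY
  refine eventually_iterate_image_inter_nonempty_of_tendsto hU hV hzU hvV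
    (x := fun n => z + u n) ?_ ?_
  · simpa using tendsto_const_nhds.add hu
  · simpa [iterate_map_add, hTu] using (hZ_tendsto z hzZ).add_const v

end Mixing

theorem iterate_apply_coe_iterate_of_rightInverse {X : Type*} (T : X → X) {Y : Set X}
    (S : Y → Y) (hTS : ∀ y, T (S y) = y) (n : ℕ) (y : Y) :
    T^[n] (S^[n] y) = y := by
  induction n with
  | zero => rfl
  | succ n ih => rw [Function.iterate_succ_apply' S, Function.iterate_succ_apply T, hTS, ih]

theorem stmt0_general {X : Type*} [AddCommGroup X] [Module ℂ X] [UniformSpace X] [IsUniformAddGroup X]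
    (T : X →L[ℂ] X) (Z Y : Set X) (hZ : Dense Z) (hY : Dense Y)
    (S : Y → Y)
    (ha : ∀ z ∈ Z, Tendsto (fun n : ℕ => (⇑T)^[n] z) atTop (𝓝 0))
    (hb : ∀ y : Y, Tendsto (fun n : ℕ => ((S^[n] y : Y) : X)) atTop (𝓝 0))
    (hc : ∀ y : Y, T ((S y : Y) : X) = (y : X)) :
    ∀ U V : Set X, IsOpen U → IsOpen V → U.Nonempty → V.Nonempty →
      ∃ n₀ : ℕ, ∀ n ≥ n₀, ((⇑T)^[n] '' U ∩ V).Nonempty := by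
  have hmix : IsTopologicallyMixing T :=
    isTopologicallyMixing_of_dense T hZ hY ha fun v hv =>
      ⟨fun n => S^[n] ⟨v, hv⟩, hb ⟨v, hv⟩,
        fun n => iterate_apply_coe_iterate_of_rightInverse T S hc n ⟨v, hv⟩⟩
  exact fun U V hU hV hUne hVne => eventually_atTop.mp (hmix U V hU hV hUne hVne)

/-- **Hypercyclicity criterion (Kitai, Gethner–Shapiro, Costakis–Sambarino).**
Let `X` be a separable Fréchet space (complete metrizable locally convex topological
vector space over `ℂ`) and `T : X → X` a continuous linear operator. If there are dense
subsets `Z, Y ⊆ X` and a map `S : Y → Y` such that `Tⁿ z → 0` for all `z ∈ Z`,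
`Sⁿ y → 0` for all `y ∈ Y`, and `T (S y) = y` for all `y ∈ Y`, then `T` is mixing. -/
theorem stmt0 {X : Type*} [AddCommGroup X] [Module ℂ X] [UniformSpace X] [IsUniformAddGroup X]
    [ContinuousSMul ℂ X] [CompleteSpace X] [TopologicalSpace.MetrizableSpace X]
    [TopologicalSpace.SeparableSpace X]
    [Module ℝ X] [IsScalarTower ℝ ℂ X] [LocallyConvexSpace ℝ X]
    (T : X →L[ℂ] X) (Z Y : Set X) (hZ : Dense Z) (hY : Dense Y)
    (S : Y → Y)
    (ha : ∀ z ∈ Z, Tendsto (fun n : ℕ => (⇑T)^[n] z) atTop (𝓝 0))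
    (hb : ∀ y : Y, Tendsto (fun n : ℕ => ((S^[n] y : Y) : X)) atTop (𝓝 0))
    (hc : ∀ y : Y, T ((S y : Y) : X) = (y : X)) :
    ∀ U V : Set X, IsOpen U → IsOpen V → U.Nonempty → V.Nonempty →
      ∃ n₀ : ℕ, ∀ n ≥ n₀, ((⇑T)^[n] '' U ∩ V).Nonempty :=
  stmt0_general T Z Y hZ hY S ha hb hc
end

section
/- Let X be a separable Fréchet space and let T : X → X be a continuous linear operator. Then T is mixing if and only if T is hereditarily hypercyclic, i.e., for every strictly increasing sequence (n_j) of natural numbers there exists x ∈ X such that the sequence (T^{n_j}(x))_j is dense in X. -/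
/-!
Mixing gives, for every subsequence `(n_j)` and all nonempty open `U`, `V`, some `j` with
`T^[n_j] U ∩ V ≠ ∅`; by Birkhoff's transitivity argument in the second countable Baire space `X`,
the vectors whose `(n_j)`-orbit is dense then form a dense `G_δ`. Conversely, if `T` is not mixing,
the times `n` with `T^[n] U ∩ V = ∅` form a subsequence `(n_j)`; a vector `x` with dense
`(n_j)`-orbit has some iterate `T^[k] x ∈ U`, and since `T^[k]` has dense range some
`T^[n_j] (T^[k] x)` lies in `V`, contradicting the choice of `n_j`.
-/

open Set Filter Topology

section TopologicalDynamics

variable {X : Type*} [TopologicalSpace X]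

def IsMixing (f : X → X) : Prop :=
  ∀ U V : Set X, IsOpen U → IsOpen V → U.Nonempty → V.Nonempty →
    ∃ n₀ : ℕ, ∀ n ≥ n₀, (f^[n] '' U ∩ V).Nonempty

def IsHereditarilyHypercyclic (f : X → X) : Prop :=
  ∀ m : ℕ → ℕ, StrictMono m → ∃ x : X, Dense (range fun j : ℕ => f^[m j] x)

theorem isMixing_iff_eventually {f : X → X} :
    IsMixing f ↔ ∀ U V : Set X, IsOpen U → IsOpen V → U.Nonempty → V.Nonempty →
      ∀ᶠ n in atTop, (f^[n] '' U ∩ V).Nonempty := by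
  simp only [IsMixing, eventually_atTop]

theorem dense_setOf_dense_range_apply [BaireSpace X] [SecondCountableTopology X] {ι : Type*}
    {g : ι → X → X} (hg : ∀ i, Continuous (g i))
    (htrans : ∀ U V : Set X, IsOpen U → IsOpen V → U.Nonempty → V.Nonempty →
      ∃ i, (g i '' U ∩ V).Nonempty) :
    Dense {x | Dense (range fun i => g i x)} := by
  obtain ⟨b, hbc, hbne, hb⟩ := TopologicalSpace.exists_countable_basis X
  have hopen : ∀ o ∈ b, IsOpen (⋃ i, g i ⁻¹' o) := fun o ho =>
    isOpen_iUnion fun i => (hb.isOpen ho).preimage (hg i)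
  have hdense : ∀ o ∈ b, Dense (⋃ i, g i ⁻¹' o) := by
    intro o ho
    refine dense_iff_inter_open.2 fun U hU hUne => ?_
    obtain ⟨i, _, ⟨u, hu, rfl⟩, hgu⟩ :=
      htrans U o hU (hb.isOpen ho) hUne (nonempty_iff_ne_empty.2 fun h => hbne (h ▸ ho))
    exact ⟨u, hu, mem_iUnion.2 ⟨i, hgu⟩⟩
  refine (dense_biInter_of_isOpen hopen hbc hdense).mono fun x hx => ?_
  refine hb.dense_iff.2 fun o ho _ => ?_
  obtain ⟨i, hi⟩ := mem_iUnion.1 (mem_iInter₂.1 hx o ho)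
  exact ⟨g i x, hi, mem_range_self i⟩

theorem IsMixing.isHereditarilyHypercyclic [BaireSpace X] [SecondCountableTopology X]
    [Nonempty X] {f : X → X} (hf : Continuous f) (hmix : IsMixing f) :
    IsHereditarilyHypercyclic f := by
  intro m hm
  refine (dense_setOf_dense_range_apply (fun j => hf.iterate (m j)) ?_).nonempty
  intro U V hU hV hUne hVne
  obtain ⟨n₀, hn₀⟩ := hmix U V hU hV hUne hVne
  exact ⟨n₀, hn₀ (m n₀) hm.le_apply⟩

namespace IsHereditarilyHypercyclic

variable {f : X → X}

theorem denseRange_iterate (h : IsHereditarilyHypercyclic f) (k : ℕ) : DenseRange f^[k] := by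
  obtain ⟨z, hz⟩ := h (· + k) (strictMono_id.add_const k)
  refine hz.mono (range_subset_iff.2 fun j => ?_)
  rw [add_comm, Function.iterate_add_apply]
  exact mem_range_self _

theorem isMixing (h : IsHereditarilyHypercyclic f) (hf : Continuous f) : IsMixing f := by
  refine isMixing_iff_eventually.2 fun U V hU hV hUne hVne => ?_
  by_contra hmix
  obtain ⟨m, hm, hdisj⟩ := extraction_of_frequently_atTop (not_eventually.1 hmix)
  obtain ⟨x, hx⟩ := h m hm
  have horbit : Dense (range fun k : ℕ => f^[k] x) :=
    hx.mono (range_subset_iff.2 fun j => mem_range_self (m j))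
  obtain ⟨_, hkU, k, rfl⟩ := horbit.inter_open_nonempty U hU hUne
  obtain ⟨_, hV', _, ⟨j, rfl⟩, rfl⟩ :=
    ((h.denseRange_iterate k).dense_image (hf.iterate k) hx).inter_open_nonempty V hV hVne
  refine hdisj j ⟨f^[k] (f^[m j] x), ⟨f^[k] x, hkU, ?_⟩, hV'⟩
  rw [← Function.iterate_add_apply, ← Function.iterate_add_apply, add_comm]

end IsHereditarilyHypercyclic

end TopologicalDynamics

theorem stmt1_general {X : Type*} [AddCommGroup X] [Module ℂ X] [UniformSpace X] [IsUniformAddGroup X]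
    [CompleteSpace X] [TopologicalSpace.MetrizableSpace X]
    [TopologicalSpace.SeparableSpace X]
    (T : X →L[ℂ] X) :
    (∀ U V : Set X, IsOpen U → IsOpen V → U.Nonempty → V.Nonempty →
      ∃ n₀ : ℕ, ∀ n ≥ n₀, ((⇑T)^[n] '' U ∩ V).Nonempty) ↔
    (∀ m : ℕ → ℕ, StrictMono m →
      ∃ x : X, Dense (Set.range fun j : ℕ => (⇑T)^[m j] x)) := by
  have : (uniformity X).IsCountablyGenerated := by
    rw [uniformity_eq_comap_nhds_zero X]
    infer_instance
  exact ⟨IsMixing.isHereditarilyHypercyclic T.continuous,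
    fun h => IsHereditarilyHypercyclic.isMixing h T.continuous⟩

/-- On a separable Fréchet space over `ℂ`, a continuous linear operator is mixing if and
only if it is hereditarily hypercyclic: for every strictly increasing sequence `(n_j)` of
natural numbers there is a vector `x` such that `(T^[n_j] x)_j` is dense. -/
theorem stmt1 {X : Type*} [AddCommGroup X] [Module ℂ X] [UniformSpace X] [IsUniformAddGroup X]
    [ContinuousSMul ℂ X] [CompleteSpace X] [TopologicalSpace.MetrizableSpace X]
    [TopologicalSpace.SeparableSpace X]
    [Module ℝ X] [IsScalarTower ℝ ℂ X] [LocallyConvexSpace ℝ X]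
    (T : X →L[ℂ] X) :
    (∀ U V : Set X, IsOpen U → IsOpen V → U.Nonempty → V.Nonempty →
      ∃ n₀ : ℕ, ∀ n ≥ n₀, ((⇑T)^[n] '' U ∩ V).Nonempty) ↔
    (∀ m : ℕ → ℕ, StrictMono m →
      ∃ x : X, Dense (Set.range fun j : ℕ => (⇑T)^[m j] x)) :=
  stmt1_general T
end

section
/- Let E and F be complex normed spaces, let G be a complex Banach space, let M : E^m → G be a continuous symmetric m-multilinear map, and let T : F → E be an approximable operator, i.e., T lies in the operator-norm closure of the continuous finite-rank operators from F to E. Then the m-homogeneous polynomial y ↦ M(Ty, …, Ty) is approximable: for every ε > 0 there exists a function g in the linear span of { y ↦ (ψ(y))^m · b : ψ a continuous linear functional on F, b ∈ G } such that ‖M(Ty, …, Ty) − g(y)‖ ≤ ε for all y ∈ F with ‖y‖ ≤ 1. -/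
/-!
A continuous finite-rank operator is `A y = ∑ᵢ ψᵢ(y) aᵢ`, so multilinearity expands
`M(Ay, …, Ay)` into terms `(∏ⱼ ψ_{f j}(y)) • M(a_{f 1}, …, a_{f m})`, and by the polarization
identity `m! x₁⋯xₘ = ∑_S (-1)^{m-|S|} (∑_{i∈S} xᵢ)^m` each such product of functionals is a
combination of `m`-th powers of functionals: `y ↦ M(Ay, …, Ay)` is of finite type.
For general `T`, the map `A ↦ M ∘ (A, …, A)` is continuous into the continuous multilinear maps,
whose operator norm dominates the sup over the unit ball, so approximating `T` by finite-rank `A`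
approximates `M(Ty, …, Ty)` uniformly there.
-/

open Finset

theorem Finset.sum_superset_neg_one_pow_card_compl {ι R : Type*} [Fintype ι] [DecidableEq ι]
    [CommRing R] (s : Finset ι) :
    ∑ t, (if s ⊆ t then (-1 : R) ^ #tᶜ else 0) = if s = univ then 1 else 0 := by
  rw [← Fintype.sum_bijective _ compl_involutive.bijective _ _ fun _ => rfl]
  simp only [compl_compl, subset_compl_comm (s := s), ← sum_filter, ← compl_eq_empty_iff s,
    filter_subset_univ]
  simpa [apply_ite (Int.cast : ℤ → R)] using
    congrArg (Int.cast : ℤ → R) (sum_powerset_neg_one_pow_card (x := sᶜ))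

theorem Fintype.sum_ite_bijective_eq_sum_perm {ι M : Type*} [Fintype ι] [DecidableEq ι]
    [AddCommMonoid M] (g : (ι → ι) → M) :
    ∑ f, (if Function.Bijective f then g f else 0) = ∑ σ : Equiv.Perm ι, g σ := by
  have : ({f | Function.Bijective f} : Finset (ι → ι)) = univ.map ⟨_, Equiv.coe_fn_injective⟩ := by
    ext f
    simp only [mem_filter, mem_univ, true_and, mem_map, Function.Embedding.coeFn_mk]
    exact ⟨fun h => ⟨Equiv.ofBijective f h, rfl⟩, fun ⟨σ, hσ⟩ => hσ ▸ σ.bijective⟩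
  rw [← sum_filter, this, sum_map]
  rfl

theorem sum_neg_one_pow_card_compl_mul_sum_pow {ι R : Type*} [Fintype ι] [DecidableEq ι]
    [CommRing R] (t : ι → R) :
    ∑ S : Finset ι, (-1 : R) ^ #Sᶜ * (∑ j ∈ S, t j) ^ Fintype.card ι
      = (Fintype.card ι).factorial * ∏ i, t i := by
  have expand (S : Finset ι) : (∑ j ∈ S, t j) ^ Fintype.card ι
      = ∑ f : ι → ι, if ∀ i, f i ∈ S then ∏ i, t (f i) else 0 := by
    rw [← card_univ, ← prod_const, prod_univ_sum, ← sum_filter]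
    congr 1
    ext f
    simp [Fintype.mem_piFinset]
  have image_eq_univ (f : ι → ι) : image f univ = univ ↔ Function.Bijective f := by
    rw [← Finite.surjective_iff_bijective, ← coe_eq_univ, coe_image, coe_univ, Set.image_univ,
      Set.range_eq_univ]
  calc ∑ S : Finset ι, (-1 : R) ^ #Sᶜ * (∑ j ∈ S, t j) ^ Fintype.card ι
      = ∑ f : ι → ι, (∏ i, t (f i)) * ∑ S, if image f univ ⊆ S then (-1 : R) ^ #Sᶜ else 0 := by
        simp only [expand, mul_sum, sum_comm (γ := ι → ι), image_subset_iff, mem_univ,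
          forall_const]
        refine sum_congr rfl fun f _ => sum_congr rfl fun S _ => ?_
        split_ifs <;> ring
    _ = ∑ f : ι → ι, if Function.Bijective f then ∏ i, t (f i) else 0 := by
        simp only [sum_superset_neg_one_pow_card_compl, image_eq_univ, mul_ite, mul_one, mul_zero]
    _ = (Fintype.card ι).factorial * ∏ i, t i := by
        rw [Fintype.sum_ite_bijective_eq_sum_perm]
        simp [Equiv.prod_comp, Fintype.card_perm]

section FiniteType

variable {𝕜 E F G : Type*} [NontriviallyNormedField 𝕜]
  [NormedAddCommGroup E] [NormedSpace 𝕜 E] [NormedAddCommGroup F] [NormedSpace 𝕜 F]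
  [NormedAddCommGroup G] [NormedSpace 𝕜 G]

variable (𝕜 F G) in
def finiteTypePolynomials (m : ℕ) : Submodule 𝕜 (F → G) :=
  Submodule.span 𝕜 {h | ∃ (ψ : F →L[𝕜] 𝕜) (b : G), h = fun y => ψ y ^ m • b}

theorem prod_smul_mem_finiteTypePolynomials [CharZero 𝕜] {m : ℕ} (ψ : Fin m → F →L[𝕜] 𝕜)
    (b : G) : (fun y => (∏ i, ψ i y) • b) ∈ finiteTypePolynomials 𝕜 F G m := by
  have polarize : (fun y => (∏ i, ψ i y) • b) = ∑ S : Finset (Fin m),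
      ((m.factorial : 𝕜)⁻¹ * (-1) ^ #Sᶜ) • fun y => (∑ i ∈ S, ψ i) y ^ m • b := by
    ext y
    simp only [Finset.sum_apply, Pi.smul_apply, smul_smul, ← Finset.sum_smul, mul_assoc,
      ← Finset.mul_sum, FunLike.coe_sum]
    have polarization := sum_neg_one_pow_card_compl_mul_sum_pow fun i => ψ i y
    rw [Fintype.card_fin] at polarization
    rw [polarization, inv_mul_cancel_left₀ (by exact_mod_cast m.factorial_ne_zero)]
  rw [polarize]
  exact Submodule.sum_mem _ fun S _ => Submodule.smul_mem _ _ (Submodule.subset_span ⟨_, b, rfl⟩)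

theorem ContinuousLinearMap.exists_eq_sum_smul_of_finiteDimensional_range [CompleteSpace 𝕜]
    (A : F →L[𝕜] E) [FiniteDimensional 𝕜 (LinearMap.range (A : F →ₗ[𝕜] E))] :
    ∃ (n : ℕ) (ψ : Fin n → F →L[𝕜] 𝕜) (a : Fin n → E), ∀ y, A y = ∑ i, ψ i y • a i := by
  set V := LinearMap.range (A : F →ₗ[𝕜] E)
  let b := Module.finBasis 𝕜 V
  let s : F →L[𝕜] V := A.codRestrict V (LinearMap.mem_range_self _)
  refine ⟨_, fun i => (b.coord i).toContinuousLinearMap.comp s, fun i => b i, fun y => ?_⟩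
  have h : (s y : E) = ∑ i, b.repr (s y) i • (b i : E) := by
    simpa only [Submodule.coe_sum, Submodule.coe_smul] using
      congrArg Subtype.val (b.sum_repr (s y)).symm
  exact h

theorem ContinuousMultilinearMap.mem_finiteTypePolynomials_of_finiteDimensional_range
    [CharZero 𝕜] [CompleteSpace 𝕜] {m : ℕ} (M : ContinuousMultilinearMap 𝕜 (fun _ : Fin m => E) G)
    (A : F →L[𝕜] E) [FiniteDimensional 𝕜 (LinearMap.range (A : F →ₗ[𝕜] E))] :
    (fun y => M fun _ => A y) ∈ finiteTypePolynomials 𝕜 F G m := by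
  obtain ⟨n, ψ, a, hA⟩ := A.exists_eq_sum_smul_of_finiteDimensional_range
  have expand : (fun y => M fun _ => A y)
      = ∑ f : Fin m → Fin n, fun y => (∏ j, ψ (f j) y) • M fun j => a (f j) := by
    ext y
    simp only [hA, M.map_sum, M.map_smul_univ, Finset.sum_apply]
  rw [expand]
  exact Submodule.sum_mem _ fun f _ => prod_smul_mem_finiteTypePolynomials _ _

theorem ContinuousMultilinearMap.continuous_compContinuousLinearMap_const {m : ℕ}
    (M : ContinuousMultilinearMap 𝕜 (fun _ : Fin m => E) G) :
    Continuous fun A : F →L[𝕜] E => M.compContinuousLinearMap fun _ => A :=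
  (M.compContinuousLinearMapLRight (E := fun _ => F)).coe_continuous.comp
    (continuous_pi fun _ => continuous_id)

end FiniteType

theorem stmt9_general {E F G : Type*} [NormedAddCommGroup E] [NormedSpace ℂ E]
    [NormedAddCommGroup F] [NormedSpace ℂ F]
    [NormedAddCommGroup G] [NormedSpace ℂ G]
    (m : ℕ) (M : ContinuousMultilinearMap ℂ (fun _ : Fin m => E) G)
    (T : F →L[ℂ] E)
    (hT : T ∈ closure {A : F →L[ℂ] E | FiniteDimensional ℂ (LinearMap.range (A : F →ₗ[ℂ] E))}) :
    ∀ ε > 0, ∃ g ∈ Submodule.span ℂ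
        {h : F → G | ∃ (ψ : F →L[ℂ] ℂ) (b : G), h = fun y => (ψ y) ^ m • b},
      ∀ y : F, ‖y‖ ≤ 1 → ‖M (fun _ => T y) - g y‖ ≤ ε := by
  intro ε hε
  set P := fun A : F →L[ℂ] E => M.compContinuousLinearMap fun _ => A
  have hPT : P T ∈ closure (P '' _) :=
    mem_closure_image M.continuous_compContinuousLinearMap_const.continuousAt hT
  obtain ⟨_, ⟨A, hA, rfl⟩, hdist⟩ := Metric.mem_closure_iff.1 hPT ε hε
  have : FiniteDimensional ℂ (LinearMap.range (A : F →ₗ[ℂ] E)) := hA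
  refine ⟨fun y => M fun _ => A y,
    M.mem_finiteTypePolynomials_of_finiteDimensional_range A, fun y hy => ?_⟩
  calc ‖M (fun _ => T y) - M (fun _ => A y)‖ = ‖(P T - P A) fun _ => y‖ := rfl
    _ ≤ ‖P T - P A‖ * 1 ^ m :=
      (P T - P A).le_opNorm_mul_pow_of_le (pi_norm_le_iff_of_nonneg zero_le_one |>.2 fun _ => hy)
    _ ≤ ε := by simpa [← dist_eq_norm] using hdist.le

/-- Let `E, F` be complex normed spaces, `G` a complex Banach space, `M : E^m → G` a
continuous symmetric `m`-multilinear map, and `T : F → E` an approximable operator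
(a limit in operator norm of continuous finite-rank operators). Then the
`m`-homogeneous polynomial `y ↦ M(Ty,…,Ty)` is approximable: it can be uniformly
approximated on the closed unit ball of `F` by polynomials of finite type, i.e. by
elements of the span of the functions `y ↦ (ψ y)^m • b` with `ψ ∈ F'`, `b ∈ G`. -/
theorem stmt9 {E F G : Type*} [NormedAddCommGroup E] [NormedSpace ℂ E]
    [NormedAddCommGroup F] [NormedSpace ℂ F]
    [NormedAddCommGroup G] [NormedSpace ℂ G] [CompleteSpace G]
    (m : ℕ) (M : ContinuousMultilinearMap ℂ (fun _ : Fin m => E) G)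
    (hsymm : ∀ (σ : Equiv.Perm (Fin m)) (v : Fin m → E), M (v ∘ σ) = M v)
    (T : F →L[ℂ] E)
    (hT : T ∈ closure {A : F →L[ℂ] E | FiniteDimensional ℂ (LinearMap.range (A : F →ₗ[ℂ] E))}) :
    ∀ ε > 0, ∃ g ∈ Submodule.span ℂ
        {h : F → G | ∃ (ψ : F →L[ℂ] ℂ) (b : G), h = fun y => (ψ y) ^ m • b},
      ∀ y : F, ‖y‖ ≤ 1 → ‖M (fun _ => T y) - g y‖ ≤ ε :=
  stmt9_general m M T hT
end

section
/- Let F be a Fréchet space over ℂ and let E = F'_c be the topological dual of F endowed with the topology of uniform convergence on compact subsets of F. Then E is semi-Montel: every von Neumann bounded subset of E is relatively compact (its closure in E is compact). -/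
/-!
A bounded set `B ⊆ F'_c` is bounded on every compact set, in particular pointwise bounded.
Since `F` is complete metrizable, it is a Baire space, hence barrelled, so by Banach–Steinhaus
`B` is equicontinuous. The continuous linear maps form a closed subset of the space of functions
with the topology of compact convergence, so Arzelà–Ascoli shows that `B` is relatively compact.
-/

open Bornology Set Topology

namespace UniformConvergenceCLM

variable {𝕜₁ 𝕜₂ E F : Type*} [AddCommGroup E] [AddCommGroup F]

section NormedField

variable [NormedField 𝕜₁] [NormedField 𝕜₂] {σ : 𝕜₁ →+* 𝕜₂} [Module 𝕜₁ E] [Module 𝕜₂ F]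
  [TopologicalSpace E] {𝔖 : Set (Set E)}

theorem isClosedEmbedding_ofFun_coeFn [UniformSpace F] [IsUniformAddGroup F]
    [ContinuousConstSMul 𝕜₂ F] [T2Space F] (h𝔖 : IsCoherentWith 𝔖) (h𝔖U : ⋃₀ 𝔖 = univ) :
    IsClosedEmbedding (UniformOnFun.ofFun 𝔖 ∘ ((⇑) : (E →SLᵤ[σ, 𝔖] F) → E → F)) := by
  refine ⟨isEmbedding_coeFn σ F 𝔖, ?_⟩
  have hrange : range (UniformOnFun.ofFun 𝔖 ∘ ((⇑) : (E →SLᵤ[σ, 𝔖] F) → E → F)) =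
      UniformOnFun.toFun 𝔖 ⁻¹' range ((⇑) : (E →SL[σ] F) → E → F) := by
    rw [range_comp, Equiv.image_eq_preimage_symm]
    rfl
  rw [hrange, ContinuousLinearMap.range_coeFn_eq, preimage_inter]
  exact (UniformOnFun.isClosed_setOfPred_continuous h𝔖).inter <|
    (LinearMap.isClosed_range_coe E F σ).preimage
      (UniformOnFun.uniformContinuous_toFun h𝔖U).continuous

theorem isVonNBounded_image_apply [TopologicalSpace F] [IsTopologicalAddGroup F]
    [ContinuousConstSMul 𝕜₂ F] (h𝔖U : ⋃₀ 𝔖 = univ) {S : Set (E →SLᵤ[σ, 𝔖] F)}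
    (hS : IsVonNBounded 𝕜₂ S) (x : E) : IsVonNBounded 𝕜₂ ((fun f ↦ f x) '' S) := by
  obtain ⟨s, hs, hxs⟩ := mem_sUnion.1 (h𝔖U ▸ mem_univ x)
  exact (isVonNBounded_image2_apply hS hs).subset
    (image_subset_iff.2 fun f hf ↦ mem_image2_of_mem hf hxs)

end NormedField

theorem uniformEquicontinuous_of_isVonNBounded [NontriviallyNormedField 𝕜₁]
    [NontriviallyNormedField 𝕜₂] {σ : 𝕜₁ →+* 𝕜₂} [RingHomIsometric σ] [Module 𝕜₁ E]
    [Module 𝕜₂ F] [UniformSpace E] [IsUniformAddGroup E] [ContinuousSMul 𝕜₁ E]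
    [BarrelledSpace 𝕜₁ E] [UniformSpace F] [IsUniformAddGroup F] [ContinuousConstSMul 𝕜₂ F]
    [PolynormableSpace 𝕜₂ F] {𝔖 : Set (Set E)} (h𝔖U : ⋃₀ 𝔖 = univ)
    {S : Set (E →SLᵤ[σ, 𝔖] F)} (hS : IsVonNBounded 𝕜₂ S) :
    UniformEquicontinuous fun f : S ↦ ((f : E →SLᵤ[σ, 𝔖] F) : E → F) :=
  PolynormableSpace.banach_steinhaus (𝓕 := fun f : S ↦ (f.1 : E →SL[σ] F)) fun x ↦
    (isVonNBounded_image_apply h𝔖U hS x).subset <| range_subset_iff.2 fun f ↦ mem_image_of_mem _ f.2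

end UniformConvergenceCLM

theorem stmt10_general {F : Type*} [AddCommGroup F] [Module ℂ F] [UniformSpace F] [IsUniformAddGroup F]
    [ContinuousSMul ℂ F] [CompleteSpace F] [TopologicalSpace.MetrizableSpace F]
    (B : Set (UniformConvergenceCLM (RingHom.id ℂ) ℂ {K : Set F | IsCompact K}))
    (hB : IsVonNBounded ℂ B) :
    IsCompact (closure B) := by
  -- with completeness this makes `F` a Baire space, hence barrelled
  have : (uniformity F).IsCountablyGenerated := IsUniformAddGroup.uniformity_countably_generated
  have hcover : ⋃₀ {K : Set F | IsCompact K} = univ :=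
    sUnion_eq_univ_iff.2 fun x ↦ ⟨{x}, isCompact_singleton, rfl⟩
  have hequi := UniformConvergenceCLM.uniformEquicontinuous_of_isVonNBounded hcover hB
  have hemb := UniformConvergenceCLM.isClosedEmbedding_ofFun_coeFn (σ := RingHom.id ℂ) (F := ℂ)
    CompactlyCoherentSpace.isCoherentWith hcover
  refine ArzelaAscoli.isCompact_closure_of_isClosedEmbedding (fun _ hK ↦ hK) hemb
    (fun K _ ↦ hequi.equicontinuous.equicontinuousOn K) fun _ _ x _ ↦ ?_
  have hbdd := (NormedSpace.isVonNBounded_iff ℂ).1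
    (UniformConvergenceCLM.isVonNBounded_image_apply hcover hB x)
  exact ⟨_, hbdd.isCompact_closure, fun f hf ↦ subset_closure (mem_image_of_mem _ hf)⟩

/-- Let `F` be a Fréchet space over `ℂ` and `E = F'_c` its topological dual endowed with
the topology of uniform convergence on the compact subsets of `F`. Then `E` is
semi-Montel: every von Neumann bounded subset of `E` is relatively compact. -/
theorem stmt10 {F : Type*} [AddCommGroup F] [Module ℂ F] [UniformSpace F] [IsUniformAddGroup F]
    [ContinuousSMul ℂ F] [CompleteSpace F] [TopologicalSpace.MetrizableSpace F]
    [Module ℝ F] [IsScalarTower ℝ ℂ F] [LocallyConvexSpace ℝ F]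
    (B : Set (UniformConvergenceCLM (RingHom.id ℂ) ℂ {K : Set F | IsCompact K}))
    (hB : IsVonNBounded ℂ B) :
    IsCompact (closure B) :=
  stmt10_general B hB
end

section
/- Let F be a Fréchet space over ℂ and let E = F'_c be the topological dual of F endowed with the topology of uniform convergence on compact subsets of F. Then E is hemicompact: there exists a sequence (K_n)_{n∈ℕ} of compact subsets of E such that every compact subset of E is contained in some K_n. -/
/-!
Let `Vₙ` be a decreasing basis of neighbourhoods of `0` in `F` and `Kₙ` the set of functionals
bounded by `1` on `Vₙ`. Each `Kₙ` is equicontinuous, closed and pointwise bounded, hence compact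
in `F'_c` by Arzelà–Ascoli. Conversely, `F` is Baire, so by Banach–Steinhaus every compact (hence
pointwise bounded) subset of `F'_c` is equicontinuous, i.e. bounded by `1` on some `Vₙ`.
-/

open Set Filter Topology
open scoped CompactConvergenceCLM Uniformity

section DualEquicontinuity

variable {𝕜 F G : Type*} [NontriviallyNormedField 𝕜] [AddCommGroup F] [Module 𝕜 F]
  [NormedAddCommGroup G] [NormedSpace 𝕜 G]

theorem ContinuousLinearMap.equicontinuous_iff_exists_mem_nhds_zero_norm_le_one
    [TopologicalSpace F] [IsTopologicalAddGroup F] [ContinuousConstSMul 𝕜 F] {ι : Type*}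
    (f : ι → F →L[𝕜] G) :
    Equicontinuous ((↑) ∘ f) ↔ ∃ V ∈ 𝓝 (0 : F), ∀ i, ∀ x ∈ V, ‖f i x‖ ≤ 1 := by
  constructor
  · intro h
    refine ⟨_, Metric.equicontinuousAt_iff_right.mp (h 0) 1 one_pos, fun i x hx => ?_⟩
    simpa using (hx i).le
  · rintro ⟨V, hV, hf⟩
    refine equicontinuous_of_equicontinuousAt_zero f (Metric.equicontinuousAt_iff_right.mpr ?_)
    intro ε hε
    obtain ⟨c, hc0, hcε⟩ := NormedField.exists_norm_lt 𝕜 hε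
    filter_upwards [(set_smul_mem_nhds_zero_iff (norm_pos_iff.mp hc0)).mpr hV] with x hx i
    obtain ⟨y, hy, rfl⟩ := mem_smul_set.mp hx
    calc dist (f i 0) (f i (c • y)) = ‖c‖ * ‖f i y‖ := by simp [norm_smul]
      _ ≤ ‖c‖ := mul_le_of_le_one_right hc0.le (hf i y hy)
      _ < ε := hcε

theorem exists_norm_apply_le_of_norm_le_one_on_nhds_zero [TopologicalSpace F]
    [ContinuousSMul 𝕜 F] {V : Set F} (hV : V ∈ 𝓝 0) (x : F) :
    ∃ r, ∀ f : F →ₗ[𝕜] G, (∀ y ∈ V, ‖f y‖ ≤ 1) → ‖f x‖ ≤ r := by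
  obtain ⟨r, -, hr⟩ := (absorbent_nhds_zero (𝕜 := 𝕜) hV x).exists_pos
  obtain ⟨c, hc⟩ := NormedField.exists_lt_norm 𝕜 r
  obtain ⟨y, hy, rfl⟩ := hr c hc.le (mem_singleton x)
  refine ⟨‖c‖, fun f hf => ?_⟩
  rw [map_smul, norm_smul]
  exact mul_le_of_le_one_right (norm_nonneg c) (hf y hy)

theorem CompactConvergenceCLM.isCompact_setOf_forall_norm_le_one [ProperSpace G]
    [TopologicalSpace F] [IsTopologicalAddGroup F] [ContinuousSMul 𝕜 F]
    [CompactlyCoherentSpace F]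
    {V : Set F} (hV : V ∈ 𝓝 0) :
    IsCompact {f : F →L_c[𝕜] G | ∀ x ∈ V, ‖f x‖ ≤ 1} := by
  set S := {f : F →L_c[𝕜] G | ∀ x ∈ V, ‖f x‖ ≤ 1}
  have hS : IsClosed S := by
    simp only [S, ofPred_forall]
    exact isClosed_biInter fun x _ =>
      isClosed_le (continuous_norm.comp (continuous_eval_const x)) continuous_const
  have : CompleteSpace (F →L_c[𝕜] G) := UniformConvergenceCLM.completeSpace (RingHom.id 𝕜) G
    CompactlyCoherentSpace.isCoherentWith sUnion_isCompact_eq_univ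
  have : T2Space (UniformOnFun F G {K : Set F | IsCompact K}) :=
    UniformOnFun.t2Space_of_covering sUnion_isCompact_eq_univ
  rw [← hS.closure_eq]
  refine ArzelaAscoli.isCompact_closure_of_isClosedEmbedding (fun K hK => hK)
    (UniformConvergenceCLM.isUniformEmbedding_coeFn (RingHom.id 𝕜) G
      {K : Set F | IsCompact K}).isClosedEmbedding
    (fun K _ => ?_) (fun K _ x _ => ?_)
  · exact ((ContinuousLinearMap.equicontinuous_iff_exists_mem_nhds_zero_norm_le_one
      (fun f : S => (f.1 : F →L[𝕜] G))).mpr ⟨V, hV, fun f => f.2⟩).equicontinuousOn K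
  · obtain ⟨r, hr⟩ := exists_norm_apply_le_of_norm_le_one_on_nhds_zero (𝕜 := 𝕜) (G := G) hV x
    exact ⟨Metric.closedBall 0 r, isCompact_closedBall 0 r,
      fun f hf => mem_closedBall_zero_iff.mpr (hr (f : F →L[𝕜] G).toLinearMap hf)⟩

theorem UniformConvergenceCLM.equicontinuous_of_isCompact [UniformSpace F]
    [IsUniformAddGroup F] [ContinuousSMul 𝕜 F] [BarrelledSpace 𝕜 F] {𝔖 : Set (Set F)}
    (h𝔖 : ⋃₀ 𝔖 = univ) {C : Set (UniformConvergenceCLM (RingHom.id 𝕜) G 𝔖)}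
    (hC : IsCompact C) :
    Equicontinuous ((↑) ∘ fun f : C => (f.1 : F →L[𝕜] G)) := by
  have := UniformConvergenceCLM.continuousEvalConst (RingHom.id 𝕜) G 𝔖 h𝔖
  refine (PolynormableSpace.banach_steinhaus fun x => ?_).equicontinuous
  refine ((hC.image (continuous_eval_const x)).isVonNBounded 𝕜).subset ?_
  exact range_subset_iff.mpr fun f => mem_image_of_mem _ f.2

end DualEquicontinuity

theorem stmt11_general {F : Type*} [AddCommGroup F] [Module ℂ F] [UniformSpace F] [IsUniformAddGroup F]
    [ContinuousSMul ℂ F] [CompleteSpace F] [TopologicalSpace.MetrizableSpace F] :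
    ∃ K : ℕ → Set (UniformConvergenceCLM (RingHom.id ℂ) ℂ {K : Set F | IsCompact K}),
      (∀ n, IsCompact (K n)) ∧
      ∀ C : Set (UniformConvergenceCLM (RingHom.id ℂ) ℂ {K : Set F | IsCompact K}),
        IsCompact C → ∃ n, C ⊆ K n := by
  -- makes `F` completely metrizable, hence Baire, hence barrelled
  have : (𝓤 F).IsCountablyGenerated := IsUniformAddGroup.uniformity_countably_generated
  obtain ⟨V, hV⟩ := (𝓝 (0 : F)).exists_antitone_basis
  refine ⟨fun n => {f | ∀ x ∈ V n, ‖f x‖ ≤ 1},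
    fun n => CompactConvergenceCLM.isCompact_setOf_forall_norm_le_one (hV.mem n),
    fun C hC => ?_⟩
  obtain ⟨W, hW, hCW⟩ := (ContinuousLinearMap.equicontinuous_iff_exists_mem_nhds_zero_norm_le_one
    _).mp (UniformConvergenceCLM.equicontinuous_of_isCompact sUnion_isCompact_eq_univ hC)
  obtain ⟨n, hn⟩ := hV.mem_iff.mp hW
  exact ⟨n, fun f hf x hx => hCW ⟨f, hf⟩ x (hn hx)⟩

/-- Let `F` be a Fréchet space over `ℂ` and `E = F'_c` its topological dual endowed with
the topology of uniform convergence on the compact subsets of `F`. Then `E` is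
hemicompact: there is a sequence of compact sets such that every compact subset of `E`
is contained in one of them. -/
theorem stmt11 {F : Type*} [AddCommGroup F] [Module ℂ F] [UniformSpace F] [IsUniformAddGroup F]
    [ContinuousSMul ℂ F] [CompleteSpace F] [TopologicalSpace.MetrizableSpace F]
    [Module ℝ F] [IsScalarTower ℝ ℂ F] [LocallyConvexSpace ℝ F] :
    ∃ K : ℕ → Set (UniformConvergenceCLM (RingHom.id ℂ) ℂ {K : Set F | IsCompact K}),
      (∀ n, IsCompact (K n)) ∧
      ∀ C : Set (UniformConvergenceCLM (RingHom.id ℂ) ℂ {K : Set F | IsCompact K}),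
        IsCompact C → ∃ n, C ⊆ K n :=
  stmt11_general
end

section
/- Let F be a Fréchet space over ℂ and let E = F'_c be the topological dual of F endowed with the topology of uniform convergence on compact subsets of F. Then E is a k-space: a subset A ⊆ E is closed if and only if A ∩ K is closed in K for every compact subset K of E. -/
/-!
A Banach–Dieudonné argument; `X°` denotes the polar of `X ⊆ F` in `F'_c`. Polars of
neighbourhoods of `0` are equicontinuous, hence compact in `F'_c` by Arzelà–Ascoli. By
translation it suffices to show that a set `A ∌ 0` meeting every compact set in a compact set
misses a neighbourhood of `0`. Fix a decreasing basis `(Uₙ)` of neighbourhoods of `0` in `F`.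
Since `A ∩ Uₙ₊₁°` is compact and the closed sets `{x}°`, `x ∈ Uₙ`, cut out `Uₙ°`, one can choose
finite sets `B₀ ⊆ B₁ ⊆ ⋯` with `Bₙ₊₁ ⊆ Bₙ ∪ Uₙ` and `Bₙ° ∩ A ∩ Uₙ° = ∅`. Then
`S = {0} ∪ ⋃ Bₙ` is compact, as only finitely many of its points lie outside any neighbourhood
of `0`, so `S°` is a neighbourhood of `0` in `F'_c`; it misses `A` because every continuous
functional lies in some `Uₙ°`.
-/

open Set Filter Topology Metric Pointwise

theorem exists_seq_of_forall_exists_succ {α : Type*} {P : ℕ → α → Prop}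
    {R : ℕ → α → α → Prop} (h₀ : ∃ a, P 0 a) (h : ∀ n a, P n a → ∃ b, P (n + 1) b ∧ R n a b) :
    ∃ f : ℕ → α, ∀ n, P n (f n) ∧ R n (f n) (f (n + 1)) := by
  obtain ⟨a, ha⟩ := h₀
  choose! g hg using h
  let f : ℕ → α := fun n => Nat.rec a g n
  have hf : ∀ n, P n (f n) := by
    intro n
    induction n with
    | zero => exact ha
    | succ n ih => exact (hg n _ ih).1
  exact ⟨f, fun n => ⟨hf n, (hg n _ (hf n)).2⟩⟩

theorem Set.iUnion_subset_union_of_succ_subset {α : Type*} {B u : ℕ → Set α} (hB : Monotone B)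
    (hu : Antitone u) (h : ∀ n, B (n + 1) ⊆ B n ∪ u n) (N : ℕ) : ⋃ n, B n ⊆ B N ∪ u N := by
  refine iUnion_subset fun n => ?_
  rcases le_total n N with hn | hn
  · exact (hB hn).trans subset_union_left
  · induction n, hn using Nat.le_induction with
    | base => exact subset_union_left
    | succ n hn ih => exact (h n).trans (union_subset ih ((hu hn).trans subset_union_right))

theorem isCompact_of_forall_nhds_finite_diff {X : Type*} [TopologicalSpace X] {S : Set X} {x : X}
    (hx : x ∈ S) (h : ∀ V ∈ 𝓝 x, (S \ V).Finite) : IsCompact S := by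
  rw [isCompact_iff_ultrafilter_le_nhds]
  intro ℱ hℱ
  by_cases hℱx : ↑ℱ ≤ 𝓝 x
  · exact ⟨x, hx, hℱx⟩
  obtain ⟨V, hV, hVℱ⟩ := Filter.not_le.1 hℱx
  have hSV : S \ V ∈ ℱ :=
    inter_mem (le_principal_iff.1 hℱ) (Ultrafilter.compl_mem_iff_notMem.2 hVℱ)
  obtain ⟨y, hy, hℱy⟩ := (h V hV).isCompact.ultrafilter_le_nhds ℱ (le_principal_iff.2 hSV)
  exact ⟨y, hy.1, hℱy⟩

theorem CompactlyCoherentSpace.of_compl_mem_nhds_zero {G : Type*} [TopologicalSpace G]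
    [AddGroup G] [IsTopologicalAddGroup G]
    (h : ∀ A : Set G, 0 ∉ A → (∀ K, IsCompact K → IsCompact (A ∩ K)) → Aᶜ ∈ 𝓝 0) :
    CompactlyCoherentSpace G := by
  refine of_isClosed fun A hA => ?_
  have hAK : ∀ K, IsCompact K → IsCompact (A ∩ K) := fun K hK => by
    have := isCompact_iff_compactSpace.mp hK
    simpa [inter_comm] using (hA K hK).isCompact.image continuous_subtype_val
  rw [← isOpen_compl_iff, isOpen_iff_mem_nhds]
  intro x hx
  let τ := Homeomorph.addLeft x
  have hτ : (τ ⁻¹' A)ᶜ ∈ 𝓝 0 := by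
    refine h _ (by simpa [τ] using hx) fun K hK => ?_
    rw [← τ.preimage_image K, ← preimage_inter]
    exact τ.isCompact_preimage.2 (hAK _ (hK.image τ.continuous))
  rw [← map_add_left_nhds_zero x]
  exact hτ

theorem UniformConvergenceCLM.isClosedEmbedding_coeFn {𝕜₁ 𝕜₂ : Type*} [NormedField 𝕜₁]
    [NormedField 𝕜₂] (σ : 𝕜₁ →+* 𝕜₂) {E F : Type*} [AddCommGroup E] [Module 𝕜₁ E]
    [TopologicalSpace E] [AddCommGroup F] [Module 𝕜₂ F] [UniformSpace F] [IsUniformAddGroup F]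
    [ContinuousConstSMul 𝕜₂ F] [T2Space F] {𝔖 : Set (Set E)} (h𝔖 : IsCoherentWith 𝔖)
    (h𝔖U : ⋃₀ 𝔖 = univ) :
    IsClosedEmbedding
      (UniformOnFun.ofFun 𝔖 ∘ (DFunLike.coe : UniformConvergenceCLM σ F 𝔖 → E → F)) := by
  refine ⟨(isUniformEmbedding_coeFn σ F 𝔖).isEmbedding, ?_⟩
  convert (UniformOnFun.isClosed_setOfPred_continuous h𝔖).inter <|
    (LinearMap.isClosed_range_coe E F σ).preimage
      (UniformOnFun.uniformContinuous_toFun h𝔖U).continuous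
  exact ContinuousLinearMap.range_coeFn_eq

abbrev CompactConvergenceDual (𝕜 F : Type*) [NontriviallyNormedField 𝕜] [AddCommGroup F]
    [TopologicalSpace F] [Module 𝕜 F] : Type _ :=
  UniformConvergenceCLM (RingHom.id 𝕜) 𝕜 {K : Set F | IsCompact K}

namespace CompactConvergenceDual

variable {𝕜 : Type*} [NontriviallyNormedField 𝕜] {F : Type*} [AddCommGroup F] [TopologicalSpace F]
  [Module 𝕜 F]

instance : ContinuousEvalConst (CompactConvergenceDual 𝕜 F) F 𝕜 :=
  UniformConvergenceCLM.continuousEvalConst _ _ _ sUnion_isCompact_eq_univ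

variable (𝕜) in
def polar (s : Set F) : Set (CompactConvergenceDual 𝕜 F) := StrongDual.polar 𝕜 s

theorem mem_polar_iff {f : CompactConvergenceDual 𝕜 F} {s : Set F} :
    f ∈ polar 𝕜 s ↔ ∀ x ∈ s, ‖f x‖ ≤ 1 :=
  Iff.rfl

theorem polar_union {s t : Set F} : polar 𝕜 (s ∪ t) = polar 𝕜 s ∩ polar 𝕜 t :=
  LinearMap.polar_union _

theorem polar_antitone : Antitone (polar 𝕜 : Set F → Set (CompactConvergenceDual 𝕜 F)) :=
  LinearMap.polar_antitone _

@[simp]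
theorem polar_empty : polar 𝕜 (∅ : Set F) = univ :=
  LinearMap.polar_empty _

@[simp]
theorem polar_univ : polar 𝕜 (univ : Set F) = {0} :=
  StrongDual.polar_univ 𝕜

theorem isClosed_polar (s : Set F) : IsClosed (polar 𝕜 s) := by
  rw [polar, StrongDual.polar, LinearMap.polar_eq_iInter]
  exact isClosed_biInter fun x _ => isClosed_le (continuous_eval_const x).norm continuous_const

theorem polar_mem_nhds_zero {K : Set F} (hK : IsCompact K) : polar 𝕜 K ∈ 𝓝 0 := by
  have hb := UniformConvergenceCLM.hasBasis_nhds_zero (RingHom.id 𝕜) 𝕜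
    {K : Set F | IsCompact K} ⟨∅, isCompact_empty⟩
    fun K hK L hL => ⟨K ∪ L, hK.union hL, subset_union_left, subset_union_right⟩
  exact hb.mem_of_superset (i := (K, closedBall 0 1)) ⟨hK, closedBall_mem_nhds 0 one_pos⟩
    fun f hf x hx => mem_closedBall_zero_iff.1 (hf x hx)

theorem exists_mem_polar_of_hasBasis {ι : Type*} {p : ι → Prop} {u : ι → Set F}
    (hu : (𝓝 (0 : F)).HasBasis p u) (f : CompactConvergenceDual 𝕜 F) :
    ∃ i, p i ∧ f ∈ polar 𝕜 (u i) := by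
  have : f ⁻¹' closedBall 0 1 ∈ 𝓝 0 :=
    (map_continuous f).continuousAt.preimage_mem_nhds <| by
      simpa using closedBall_mem_nhds 0 one_pos
  obtain ⟨i, hi, hui⟩ := hu.mem_iff.1 this
  exact ⟨i, hi, fun x hx => mem_closedBall_zero_iff.1 (hui hx)⟩

theorem norm_apply_le_of_mem_polar {f : CompactConvergenceDual 𝕜 F} {U : Set F}
    (hf : f ∈ polar 𝕜 U) {c : 𝕜} {x : F} (hx : x ∈ c • U) : ‖f x‖ ≤ ‖c‖ := by
  obtain ⟨y, hy, rfl⟩ := hx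
  rw [map_smul, smul_eq_mul, norm_mul]
  exact mul_le_of_le_one_right (norm_nonneg c) (hf y hy)

theorem exists_finite_subset_inter_polar_eq_empty {K : Set (CompactConvergenceDual 𝕜 F)}
    (hK : IsCompact K) {U : Set F} (h : K ∩ polar 𝕜 U = ∅) :
    ∃ C ⊆ U, C.Finite ∧ K ∩ polar 𝕜 C = ∅ := by
  obtain ⟨t, ht⟩ := hK.elim_finite_subfamily_closed (fun x : U => polar 𝕜 {(x : F)})
    (fun x => isClosed_polar _) (by rw [← h]; congr 1; ext f; simp [mem_polar_iff])
  refine ⟨(↑) '' (t : Set U), Subtype.coe_image_subset _ _, t.finite_toSet.image _, ?_⟩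
  rw [← ht]
  congr 1
  ext f
  simp [mem_polar_iff]

variable [IsTopologicalAddGroup F] [ContinuousSMul 𝕜 F]

theorem equicontinuous_polar {U : Set F} (hU : U ∈ 𝓝 0) :
    Equicontinuous fun f : polar 𝕜 U => ((f : CompactConvergenceDual 𝕜 F) : F → 𝕜) := by
  refine equicontinuous_of_equicontinuousAt_zero
    (fun f : polar 𝕜 U => (f : CompactConvergenceDual 𝕜 F)) ?_
  rw [Metric.equicontinuousAt_iff_right]
  intro ε hε
  obtain ⟨c, hc₀, hcε⟩ := NormedField.exists_norm_lt 𝕜 hε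
  filter_upwards [(set_smul_mem_nhds_zero_iff (norm_pos_iff.1 hc₀)).2 hU] with x hx f
  simpa using (norm_apply_le_of_mem_polar f.2 hx).trans_lt hcε

theorem isCompact_polar [ProperSpace 𝕜] [CompactlyCoherentSpace F] {U : Set F} (hU : U ∈ 𝓝 0) :
    IsCompact (polar 𝕜 U) := by
  have hcl := ArzelaAscoli.isCompact_closure_of_isClosedEmbedding
    (𝔖 := {K : Set F | IsCompact K}) (fun K hK => hK)
    (UniformConvergenceCLM.isClosedEmbedding_coeFn (RingHom.id 𝕜)
      CompactlyCoherentSpace.isCoherentWith sUnion_isCompact_eq_univ)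
    (fun K _ => (equicontinuous_polar hU).equicontinuousOn K)
    (s := polar 𝕜 U) fun K _ x _ => ?_
  · rwa [(isClosed_polar U).closure_eq] at hcl
  obtain ⟨r, -, hr⟩ := (absorbent_nhds_zero (𝕜 := 𝕜) hU x).exists_pos
  obtain ⟨c, hc⟩ := NormedField.exists_lt_norm 𝕜 r
  exact ⟨closedBall 0 ‖c‖, isCompact_closedBall 0 ‖c‖, fun f hf => mem_closedBall_zero_iff.2
    (norm_apply_le_of_mem_polar hf (hr c hc.le rfl))⟩

variable [ProperSpace 𝕜]

theorem exists_finite_polar_union_inter_eq_empty [CompactlyCoherentSpace F]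
    {A : Set (CompactConvergenceDual 𝕜 F)} (hA : ∀ K, IsCompact K → IsCompact (A ∩ K))
    {B U V : Set F} (hV : V ∈ 𝓝 0) (h : polar 𝕜 B ∩ A ∩ polar 𝕜 U = ∅) :
    ∃ C ⊆ U, C.Finite ∧ polar 𝕜 (B ∪ C) ∩ A ∩ polar 𝕜 V = ∅ := by
  have hK : IsCompact (polar 𝕜 B ∩ A ∩ polar 𝕜 V) := by
    rw [inter_assoc]
    exact (hA _ (isCompact_polar hV)).inter_left (isClosed_polar B)
  obtain ⟨C, hCU, hC, hKC⟩ := exists_finite_subset_inter_polar_eq_empty hK (U := U) <|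
    subset_eq_empty (inter_subset_inter_left _ inter_subset_left) h
  refine ⟨C, hCU, hC, ?_⟩
  rw [polar_union, ← hKC]
  ext f
  simp only [mem_inter_iff]
  tauto

theorem compl_mem_nhds_zero_of_isCompact_inter [FirstCountableTopology F]
    {A : Set (CompactConvergenceDual 𝕜 F)} (h₀ : 0 ∉ A)
    (hA : ∀ K, IsCompact K → IsCompact (A ∩ K)) : Aᶜ ∈ 𝓝 0 := by
  obtain ⟨u, hu⟩ := (𝓝 (0 : F)).exists_antitone_basis
  have base : ∃ B : Set F, B.Finite ∧ polar 𝕜 B ∩ A ∩ polar 𝕜 (u 0) = ∅ := by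
    obtain ⟨C, -, hC, hCA⟩ := exists_finite_polar_union_inter_eq_empty hA (hu.mem 0)
      (B := ∅) (U := univ) (by simpa using h₀)
    exact ⟨C, hC, by simpa using hCA⟩
  have step : ∀ n (B : Set F), B.Finite ∧ polar 𝕜 B ∩ A ∩ polar 𝕜 (u n) = ∅ →
      ∃ B', (B'.Finite ∧ polar 𝕜 B' ∩ A ∩ polar 𝕜 (u (n + 1)) = ∅) ∧
        B ⊆ B' ∧ B' ⊆ B ∪ u n := by
    rintro n B ⟨hB, hBA⟩
    obtain ⟨C, hCu, hC, hBC⟩ := exists_finite_polar_union_inter_eq_empty hA (hu.mem (n + 1)) hBA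
    exact ⟨B ∪ C, ⟨hB.union hC, hBC⟩, subset_union_left, union_subset_union_right _ hCu⟩
  obtain ⟨B, hB⟩ := exists_seq_of_forall_exists_succ base step
  have hS : IsCompact (insert 0 (⋃ n, B n)) := by
    refine isCompact_of_forall_nhds_finite_diff (mem_insert _ _) fun V hV => ?_
    obtain ⟨N, -, hN⟩ := hu.1.mem_iff.1 hV
    refine (hB N).1.1.subset ?_
    rintro x ⟨rfl | hx, hxV⟩
    · exact absurd (mem_of_mem_nhds hV) hxV
    rcases iUnion_subset_union_of_succ_subset (monotone_nat_of_le_succ fun n => (hB n).2.1)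
      hu.antitone (fun n => (hB n).2.2) N hx with h | h
    exacts [h, absurd (hN h) hxV]
  filter_upwards [polar_mem_nhds_zero hS] with f hf hfA
  obtain ⟨n, -, hfn⟩ := exists_mem_polar_of_hasBasis hu.1 f
  exact (hB n).1.2.subset
    ⟨⟨polar_antitone ((subset_iUnion B n).trans (subset_insert _ _)) hf, hfA⟩, hfn⟩

instance [FirstCountableTopology F] : CompactlyCoherentSpace (CompactConvergenceDual 𝕜 F) :=
  .of_compl_mem_nhds_zero fun _ h₀ hA => compl_mem_nhds_zero_of_isCompact_inter h₀ hA

end CompactConvergenceDual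

theorem stmt12_general {F : Type*} [AddCommGroup F] [Module ℂ F] [UniformSpace F] [IsUniformAddGroup F]
    [ContinuousSMul ℂ F] [TopologicalSpace.MetrizableSpace F]
    (A : Set (UniformConvergenceCLM (RingHom.id ℂ) ℂ {K : Set F | IsCompact K})) :
    IsClosed A ↔
      ∀ K : Set (UniformConvergenceCLM (RingHom.id ℂ) ℂ {K : Set F | IsCompact K}),
        IsCompact K → IsClosed ((Subtype.val ⁻¹' A) : Set K) :=
  CompactlyCoherentSpace.isClosed_iff A

/-- Let `F` be a Fréchet space over `ℂ` and `E = F'_c` its topological dual endowed with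
the topology of uniform convergence on the compact subsets of `F`. Then `E` is a
k-space: a subset `A ⊆ E` is closed if and only if `A ∩ K` is closed in `K` for every
compact `K ⊆ E`. -/
theorem stmt12 {F : Type*} [AddCommGroup F] [Module ℂ F] [UniformSpace F] [IsUniformAddGroup F]
    [ContinuousSMul ℂ F] [CompleteSpace F] [TopologicalSpace.MetrizableSpace F]
    [Module ℝ F] [IsScalarTower ℝ ℂ F] [LocallyConvexSpace ℝ F]
    (A : Set (UniformConvergenceCLM (RingHom.id ℂ) ℂ {K : Set F | IsCompact K})) :
    IsClosed A ↔
      ∀ K : Set (UniformConvergenceCLM (RingHom.id ℂ) ℂ {K : Set F | IsCompact K}),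
        IsCompact K → IsClosed ((Subtype.val ⁻¹' A) : Set K) :=
  stmt12_general A
end
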